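/- Let X, Y be Banach spaces, Q a continuous k-homogeneous polynomial from X to Y with ‖Q‖ = 1. If there exists a bounded linear operator T on Y with numerical radius v(T) = 0 and T ∘ Q ≠ 0, then n_Q^{(k)}(X, Y) = 0. -/

import Mathlib

noncomputable section

/-- `P : X → Y` is a continuous `k`-homogeneous polynomial: it is given by a continuous
`k`-linear map evaluated on the diagonal. -/
def IsHomPoly (𝕜 : Type*) [RCLike 𝕜] {X Y : Type*} [NormedAddCommGroup X] [NormedSpace 𝕜 X]
    [NormedAddCommGroup Y] [NormedSpace 𝕜 Y] (k : ℕ) (P : X → Y) : Prop :=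
  ∃ A : ContinuousMultilinearMap 𝕜 (fun _ : Fin k => X) Y, ∀ x, P x = A (fun _ => x)

/-- The norm of a polynomial: the supremum of `‖P x‖` over the closed unit ball. -/
def polyNorm {X Y : Type*} [NormedAddCommGroup X] [NormedAddCommGroup Y] (P : X → Y) : ℝ :=
  sSup { r : ℝ | ∃ x : X, ‖x‖ ≤ 1 ∧ r = ‖P x‖ }

/-- `v_{Q,δ}(P)`. -/
def vQdelta (𝕜 : Type*) [RCLike 𝕜] {X Y : Type*} [NormedAddCommGroup X] [NormedSpace 𝕜 X]
    [NormedAddCommGroup Y] [NormedSpace 𝕜 Y] (Q P : X → Y) (δ : ℝ) : ℝ :=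
  sSup { r : ℝ | ∃ (x : X) (f : Y →L[𝕜] 𝕜), ‖x‖ = 1 ∧ ‖f‖ = 1 ∧
    1 - δ < RCLike.re (f (Q x)) ∧ r = ‖f (P x)‖ }

/-- The numerical radius of `P` with respect to `Q`, as `inf_{δ>0} v_{Q,δ}(P)`. -/
def numRad (𝕜 : Type*) [RCLike 𝕜] {X Y : Type*} [NormedAddCommGroup X] [NormedSpace 𝕜 X]
    [NormedAddCommGroup Y] [NormedSpace 𝕜 Y] (Q P : X → Y) : ℝ :=
  sInf { r : ℝ | ∃ δ : ℝ, 0 < δ ∧ r = vQdelta 𝕜 Q P δ }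

/-- The approximated spatial numerical range `V_Q(P)`. -/
def VQ (𝕜 : Type*) [RCLike 𝕜] {X Y : Type*} [NormedAddCommGroup X] [NormedSpace 𝕜 X]
    [NormedAddCommGroup Y] [NormedSpace 𝕜 Y] (Q P : X → Y) : Set 𝕜 :=
  ⋂ δ ∈ Set.Ioi (0 : ℝ), closure { z : 𝕜 | ∃ (x : X) (f : Y →L[𝕜] 𝕜), ‖x‖ = 1 ∧ ‖f‖ = 1 ∧
    1 - δ < RCLike.re (f (Q x)) ∧ z = f (P x) }

/-- The polynomial numerical index `n_Q^{(k)}(X,Y)`. -/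
def polyIndex (𝕜 : Type*) [RCLike 𝕜] {X Y : Type*} [NormedAddCommGroup X] [NormedSpace 𝕜 X]
    [NormedAddCommGroup Y] [NormedSpace 𝕜 Y] (k : ℕ) (Q : X → Y) : ℝ :=
  sInf { r : ℝ | ∃ P : X → Y, IsHomPoly 𝕜 k P ∧ polyNorm P = 1 ∧ r = numRad 𝕜 Q P }

/-- The classical numerical radius of a bounded linear operator. -/
def numRadOp (𝕜 : Type*) [RCLike 𝕜] {Y : Type*} [NormedAddCommGroup Y] [NormedSpace 𝕜 Y]
    (T : Y →L[𝕜] Y) : ℝ :=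
  sSup { r : ℝ | ∃ (y : Y) (f : Y →L[𝕜] 𝕜), ‖y‖ = 1 ∧ ‖f‖ = 1 ∧ f y = 1 ∧ r = ‖f (T y)‖ }

end

/-!
A bounded operator `T` with `v(T) = 0` satisfies `f (T y) = 0` whenever `f` norms `y`, so
`‖y‖ ≤ ‖y + c • T y‖` for every scalar `c`. Applying this to `y + c • T y` and `-c` gives the
reverse estimate `‖y + c • T y‖ ≤ (1 + ‖c‖² ‖T‖²) ‖y‖`. If `‖y‖ ≤ 1`, `‖f‖ = 1` and
`re (f y) > 1 - δ`, testing `f` on `y + c • T y` with `c` of modulus `h` aligned with `f (T y)`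
gives `‖f (T y)‖ ≤ h ‖T‖² + δ / h`, which is small for `h` and then `δ` small. Hence
`v_Q(T ∘ Q) = 0`, and `T ∘ Q` normalized to norm one witnesses `n_Q^{(k)}(X, Y) = 0`.
This bypasses the Bishop–Phelps–Bollobás theorem behind the general bound `v_Q(T ∘ Q) ≤ v(T)`.
-/

section NumRadOp

variable {𝕜 : Type*} [RCLike 𝕜] {Y : Type*} [NormedAddCommGroup Y] [NormedSpace 𝕜 Y]
  {T : Y →L[𝕜] Y}

lemma apply_apply_eq_zero_of_numRadOp_eq_zero (hT : numRadOp 𝕜 T = 0) {y : Y}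
    {f : Y →L[𝕜] 𝕜} (hy : ‖y‖ = 1) (hf : ‖f‖ = 1) (hfy : f y = 1) : f (T y) = 0 := by
  have hbdd : BddAbove {r : ℝ | ∃ (y : Y) (f : Y →L[𝕜] 𝕜), ‖y‖ = 1 ∧ ‖f‖ = 1 ∧ f y = 1 ∧
      r = ‖f (T y)‖} := by
    refine ⟨‖T‖, ?_⟩
    rintro r ⟨y, f, hy, hf, -, rfl⟩
    simpa [hf, hy] using f.le_opNorm_of_le (T.le_opNorm y)
  have hle : ‖f (T y)‖ ≤ numRadOp 𝕜 T := le_csSup hbdd ⟨y, f, hy, hf, hfy, rfl⟩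
  exact norm_le_zero_iff.1 (hT ▸ hle)

lemma numRadOp_smul_eq_zero (hT : numRadOp 𝕜 T = 0) (a : 𝕜) : numRadOp 𝕜 (a • T) = 0 := by
  refine le_antisymm (Real.sSup_nonpos ?_) (Real.sSup_nonneg ?_)
  · rintro r ⟨y, f, hy, hf, hfy, rfl⟩
    simp [apply_apply_eq_zero_of_numRadOp_eq_zero hT hy hf hfy]
  · rintro r ⟨y, f, -, -, -, rfl⟩
    exact norm_nonneg _

lemma exists_norming_apply_eq_zero_of_numRadOp_eq_zero (hT : numRadOp 𝕜 T = 0) {y : Y}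
    (hy : y ≠ 0) : ∃ f : Y →L[𝕜] 𝕜, ‖f‖ = 1 ∧ f y = ‖y‖ ∧ f (T y) = 0 := by
  obtain ⟨f, hf, hfy⟩ := exists_dual_vector 𝕜 y (norm_ne_zero_iff.2 hy)
  have hy' : (‖y‖ : 𝕜) ≠ 0 := by exact_mod_cast norm_ne_zero_iff.2 hy
  have hu : f ((‖y‖ : 𝕜)⁻¹ • y) = 1 := by rw [map_smul, hfy, smul_eq_mul, inv_mul_cancel₀ hy']
  have h0 := apply_apply_eq_zero_of_numRadOp_eq_zero hT (norm_smul_inv_norm hy) hf hu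
  rw [map_smul, map_smul, smul_eq_mul, mul_eq_zero] at h0
  exact ⟨f, hf, hfy, h0.resolve_left (inv_ne_zero hy')⟩

lemma norm_le_norm_add_smul_of_numRadOp_eq_zero (hT : numRadOp 𝕜 T = 0) (c : 𝕜) (y : Y) :
    ‖y‖ ≤ ‖y + c • T y‖ := by
  rcases eq_or_ne y 0 with rfl | hy
  · simp
  obtain ⟨f, hf, hfy, hfTy⟩ := exists_norming_apply_eq_zero_of_numRadOp_eq_zero hT hy
  calc ‖y‖ = ‖f (y + c • T y)‖ := by simp [hfy, hfTy]
    _ ≤ ‖y + c • T y‖ := by simpa [hf] using f.le_opNorm (y + c • T y)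

lemma norm_add_smul_le_of_numRadOp_eq_zero (hT : numRadOp 𝕜 T = 0) (c : 𝕜) (y : Y) :
    ‖y + c • T y‖ ≤ ‖y‖ + ‖c‖ ^ 2 * ‖T‖ ^ 2 * ‖y‖ := by
  have hback : (y + c • T y) + (-c) • T (y + c • T y) = y - (c * c) • T (T y) := by
    rw [map_add, map_smul, neg_smul, smul_add, smul_smul]
    abel
  have hTT : ‖T (T y)‖ ≤ ‖T‖ ^ 2 * ‖y‖ := by
    rw [sq, mul_assoc]
    exact T.le_opNorm_of_le (T.le_opNorm y)
  calc ‖y + c • T y‖ ≤ ‖y - (c * c) • T (T y)‖ :=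
        hback ▸ norm_le_norm_add_smul_of_numRadOp_eq_zero hT (-c) _
    _ ≤ ‖y‖ + ‖c‖ ^ 2 * ‖T (T y)‖ := by
        simpa [norm_smul, sq] using norm_sub_le y ((c * c) • T (T y))
    _ ≤ ‖y‖ + ‖c‖ ^ 2 * ‖T‖ ^ 2 * ‖y‖ := by
        rw [mul_assoc]; gcongr

lemma exists_norm_le_mul_eq_norm (a : 𝕜) {h : ℝ} (hh : 0 ≤ h) :
    ∃ c : 𝕜, ‖c‖ ≤ h ∧ c * a = (h * ‖a‖ : ℝ) := by
  rcases eq_or_ne a 0 with rfl | ha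
  · exact ⟨0, by simpa using hh, by simp⟩
  have ha' : ‖a‖ ≠ 0 := norm_ne_zero_iff.2 ha
  refine ⟨(h / ‖a‖ : ℝ) * starRingEnd 𝕜 a, ?_, ?_⟩
  · rw [norm_mul, RCLike.norm_conj, RCLike.norm_ofReal, abs_of_nonneg (by positivity),
      div_mul_cancel₀ _ ha']
  · rw [mul_assoc, RCLike.conj_mul]
    push_cast
    field_simp

lemma norm_apply_le_of_one_sub_lt_re (hT : numRadOp 𝕜 T = 0) {y : Y} {f : Y →L[𝕜] 𝕜}
    (hy : ‖y‖ ≤ 1) (hf : ‖f‖ = 1) {δ : ℝ} (hre : 1 - δ < RCLike.re (f y)) {h : ℝ} (hh : 0 < h) :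
    ‖f (T y)‖ ≤ h * ‖T‖ ^ 2 + δ / h := by
  obtain ⟨c, hc, hca⟩ := exists_norm_le_mul_eq_norm (f (T y)) hh.le
  have htest : RCLike.re (f y) + h * ‖f (T y)‖ ≤ 1 + h ^ 2 * ‖T‖ ^ 2 := by
    calc RCLike.re (f y) + h * ‖f (T y)‖ = RCLike.re (f (y + c • T y)) := by
          simp [hca]
      _ ≤ ‖y + c • T y‖ := by
          simpa [hf] using (RCLike.re_le_norm _).trans (f.le_opNorm (y + c • T y))
      _ ≤ ‖y‖ + ‖c‖ ^ 2 * ‖T‖ ^ 2 * ‖y‖ := norm_add_smul_le_of_numRadOp_eq_zero hT c y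
      _ ≤ 1 + h ^ 2 * ‖T‖ ^ 2 * 1 := by gcongr
      _ = 1 + h ^ 2 * ‖T‖ ^ 2 := by ring
  have hmul : h * ‖f (T y)‖ ≤ h * (h * ‖T‖ ^ 2 + δ / h) := by
    rw [mul_add, mul_div_cancel₀ _ hh.ne']
    nlinarith
  exact le_of_mul_le_mul_left hmul hh

end NumRadOp

section NumRad

variable {𝕜 : Type*} [RCLike 𝕜] {X Y : Type*} [NormedAddCommGroup X] [NormedSpace 𝕜 X]
  [NormedAddCommGroup Y] [NormedSpace 𝕜 Y]

lemma vQdelta_nonneg (Q P : X → Y) (δ : ℝ) : 0 ≤ vQdelta 𝕜 Q P δ :=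
  Real.sSup_nonneg (by rintro r ⟨x, f, -, -, -, rfl⟩; positivity)

lemma numRad_nonneg (Q P : X → Y) : 0 ≤ numRad 𝕜 Q P :=
  Real.sInf_nonneg (by rintro r ⟨δ, -, rfl⟩; exact vQdelta_nonneg Q P δ)

lemma numRad_le_vQdelta (Q P : X → Y) {δ : ℝ} (hδ : 0 < δ) :
    numRad 𝕜 Q P ≤ vQdelta 𝕜 Q P δ :=
  csInf_le ⟨0, by rintro r ⟨δ', -, rfl⟩; exact vQdelta_nonneg Q P δ'⟩ ⟨δ, hδ, rfl⟩

lemma numRad_comp_eq_zero_of_numRadOp_eq_zero {Q : X → Y} (hQ : ∀ x, ‖x‖ = 1 → ‖Q x‖ ≤ 1)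
    {T : Y →L[𝕜] Y} (hT : numRadOp 𝕜 T = 0) : numRad 𝕜 Q (fun x => T (Q x)) = 0 := by
  refine le_antisymm (le_of_forall_pos_le_add fun ε hε => ?_) (numRad_nonneg _ _)
  set h := ε / (2 * (‖T‖ ^ 2 + 1))
  have hh : 0 < h := by positivity
  have hδ : 0 < h * ε / 2 := by positivity
  have hbound : h * ‖T‖ ^ 2 + h * ε / 2 / h ≤ ε := by
    have hhT : h * ‖T‖ ^ 2 ≤ ε / 2 := by
      rw [div_mul_eq_mul_div, div_le_div_iff₀ (by positivity) two_pos]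
      nlinarith
    rw [mul_div_assoc, mul_div_cancel_left₀ _ hh.ne']
    linarith
  have hv : vQdelta 𝕜 Q (fun x => T (Q x)) (h * ε / 2) ≤ ε := by
    refine Real.sSup_le ?_ hε.le
    rintro r ⟨x, f, hx, hf, hre, rfl⟩
    exact (norm_apply_le_of_one_sub_lt_re hT (hQ x hx) hf hre hh).trans hbound
  linarith [numRad_le_vQdelta (𝕜 := 𝕜) Q (fun x => T (Q x)) hδ]

end NumRad

open scoped Pointwise in
lemma polyNorm_smul {𝕜 : Type*} [NormedField 𝕜] {X Y : Type*} [NormedAddCommGroup X]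
    [NormedAddCommGroup Y] [NormedSpace 𝕜 Y] (a : 𝕜) (P : X → Y) :
    polyNorm (fun x => a • P x) = ‖a‖ * polyNorm P := by
  have hset : {r : ℝ | ∃ x : X, ‖x‖ ≤ 1 ∧ r = ‖a • P x‖} =
      ‖a‖ • {r : ℝ | ∃ x : X, ‖x‖ ≤ 1 ∧ r = ‖P x‖} := by
    ext r
    simp [Set.mem_smul_set, norm_smul, eq_comm]
  rw [polyNorm, hset, Real.sSup_smul_of_nonneg (norm_nonneg a), smul_eq_mul, polyNorm]

section HomPoly

variable {𝕜 : Type*} [RCLike 𝕜] {X Y Z : Type*} [NormedAddCommGroup X] [NormedSpace 𝕜 X]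
  [NormedAddCommGroup Y] [NormedSpace 𝕜 Y] [NormedAddCommGroup Z] [NormedSpace 𝕜 Z]
  {k : ℕ} {P : X → Y}

namespace IsHomPoly

lemma map_smul (hP : IsHomPoly 𝕜 k P) (c : 𝕜) (x : X) : P (c • x) = c ^ k • P x := by
  obtain ⟨A, hA⟩ := hP
  simpa [hA, Finset.prod_const] using A.map_smul_univ (fun _ => c) (fun _ => x)

lemma comp (hP : IsHomPoly 𝕜 k P) (T : Y →L[𝕜] Z) : IsHomPoly 𝕜 k (fun x => T (P x)) := by
  obtain ⟨A, hA⟩ := hP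
  exact ⟨T.compContinuousMultilinearMap A, fun x => by simp [hA]⟩

lemma bddAbove (hP : IsHomPoly 𝕜 k P) : BddAbove {r : ℝ | ∃ x : X, ‖x‖ ≤ 1 ∧ r = ‖P x‖} := by
  obtain ⟨A, hA⟩ := hP
  refine ⟨‖A‖, ?_⟩
  rintro r ⟨x, hx, rfl⟩
  calc ‖P x‖ ≤ ‖A‖ * ∏ _i : Fin k, ‖x‖ := hA x ▸ A.le_opNorm _
    _ ≤ ‖A‖ * 1 := by
        gcongr
        simpa [Finset.prod_const] using pow_le_one₀ (norm_nonneg x) hx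
    _ = ‖A‖ := mul_one _

lemma norm_apply_le_polyNorm (hP : IsHomPoly 𝕜 k P) {x : X} (hx : ‖x‖ ≤ 1) :
    ‖P x‖ ≤ polyNorm P :=
  le_csSup hP.bddAbove ⟨x, hx, rfl⟩

lemma exists_norm_le_one_apply_ne_zero (hP : IsHomPoly 𝕜 k P) (hP0 : P ≠ 0) :
    ∃ x : X, ‖x‖ ≤ 1 ∧ P x ≠ 0 := by
  obtain ⟨x, hx⟩ := Function.ne_iff.1 hP0
  rcases eq_or_ne x 0 with rfl | hx0
  · exact ⟨0, by simp, hx⟩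
  refine ⟨(‖x‖⁻¹ : 𝕜) • x, (norm_smul_inv_norm hx0).le, ?_⟩
  rw [hP.map_smul]
  exact smul_ne_zero (pow_ne_zero _ (by simpa using hx0)) hx

end IsHomPoly

end HomPoly

lemma polyIndex_eq_zero_of_numRad_eq_zero {𝕜 : Type*} [RCLike 𝕜] {X Y : Type*}
    [NormedAddCommGroup X] [NormedSpace 𝕜 X] [NormedAddCommGroup Y] [NormedSpace 𝕜 Y]
    {k : ℕ} {Q P : X → Y} (hP : IsHomPoly 𝕜 k P) (hP1 : polyNorm P = 1)
    (hQP : numRad 𝕜 Q P = 0) : polyIndex 𝕜 k Q = 0 := by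
  have hnonneg : ∀ r ∈ {r : ℝ | ∃ P : X → Y, IsHomPoly 𝕜 k P ∧ polyNorm P = 1 ∧
      r = numRad 𝕜 Q P}, 0 ≤ r := by
    rintro r ⟨P, -, -, rfl⟩
    exact numRad_nonneg Q P
  exact le_antisymm (csInf_le ⟨0, hnonneg⟩ ⟨P, hP, hP1, hQP.symm⟩) (Real.sInf_nonneg hnonneg)

theorem stmt_14_general (𝕜 : Type*) [RCLike 𝕜] (X Y : Type*) [NormedAddCommGroup X] [NormedSpace 𝕜 X]
    [NormedAddCommGroup Y] [NormedSpace 𝕜 Y]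
    (k : ℕ) (Q : X → Y) (hQ : IsHomPoly 𝕜 k Q) (hQ1 : polyNorm Q = 1)
    (T : Y →L[𝕜] Y) (hT : numRadOp 𝕜 T = 0) (hTQ : (fun x => T (Q x)) ≠ 0) :
    polyIndex 𝕜 k Q = 0 := by
  obtain ⟨x, hx, hTQx⟩ := (hQ.comp T).exists_norm_le_one_apply_ne_zero hTQ
  set c := polyNorm (fun x => T (Q x))
  have hc : 0 < c := (norm_pos_iff.2 hTQx).trans_le ((hQ.comp T).norm_apply_le_polyNorm hx)
  have hQle : ∀ x, ‖x‖ = 1 → ‖Q x‖ ≤ 1 := fun x hx => hQ1 ▸ hQ.norm_apply_le_polyNorm hx.le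
  refine polyIndex_eq_zero_of_numRad_eq_zero (hQ.comp ((c : 𝕜)⁻¹ • T)) ?_
    (numRad_comp_eq_zero_of_numRadOp_eq_zero hQle (numRadOp_smul_eq_zero hT _))
  show polyNorm (fun x => (c : 𝕜)⁻¹ • T (Q x)) = 1
  rw [polyNorm_smul, norm_inv, RCLike.norm_ofReal, abs_of_pos hc, inv_mul_cancel₀ hc.ne']

theorem stmt_14 (𝕜 : Type*) [RCLike 𝕜] (X Y : Type*) [NormedAddCommGroup X] [NormedSpace 𝕜 X]
    [NormedAddCommGroup Y] [NormedSpace 𝕜 Y] [CompleteSpace X] [CompleteSpace Y]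
    (k : ℕ) (Q : X → Y) (hQ : IsHomPoly 𝕜 k Q) (hQ1 : polyNorm Q = 1)
    (T : Y →L[𝕜] Y) (hT : numRadOp 𝕜 T = 0) (hTQ : (fun x => T (Q x)) ≠ 0) :
    polyIndex 𝕜 k Q = 0 :=
  stmt_14_general 𝕜 X Y k Q hQ hQ1 T hT hTQ
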